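/- arXiv:2604.14425 — 2 statements merged into one kernel-verified Lean document; each statement's English description precedes it below -/
import Mathlib

section
/- For φ ∈ ℂ, let J^φ be the Jordan superalgebra over ℂ of type (2,3) with homogeneous basis {e₁, e₂; f₁, f₂, f₃} (e_i even, f_j odd) and nonzero products e₁² = e₂, e₁f₂ = f₂e₁ = f₃, e₁f₃ = f₃e₁ = φf₁, e₂f₂ = f₂e₂ = f₁, f₂f₃ = −f₃f₂ = e₂ (all other products of basis vectors zero). Then for φ₁, φ₂ ∈ ℂ, the superalgebras J^{φ₁} and J^{φ₂} are isomorphic via a grading-preserving algebra isomorphism if and only if φ₁ = φ₂. -/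
noncomputable section

/-- The underlying ℤ/2-graded vector space of type `(m,n)`: even part `Fin m → ℂ`,
odd part `Fin n → ℂ`. -/
abbrev GV (m n : ℕ) : Type := (Fin m → ℂ) × (Fin n → ℂ)

/-- A superalgebra structure tensor of type `(m,n)`: structure constants
`c i j k` (even·even), `ρ i j k` (even·odd) and `Γ i j k` (odd·odd). -/
abbrev Tensor (m n : ℕ) : Type :=
  (Fin m → Fin m → Fin m → ℂ) × (Fin m → Fin n → Fin n → ℂ) × (Fin n → Fin n → Fin m → ℂ)

/-- The ℤ/2-graded multiplication on `GV m n` determined by a structure tensor. -/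
def mulOf {m n : ℕ} (μ : Tensor m n) (x y : GV m n) : GV m n :=
  (fun k => (∑ i, ∑ j, x.1 i * y.1 j * μ.1 i j k) + ∑ i, ∑ j, x.2 i * y.2 j * μ.2.2 i j k,
   fun k => (∑ i, ∑ j, x.1 i * y.2 j * μ.2.1 i j k) + ∑ i, ∑ j, y.1 i * x.2 j * μ.2.1 i j k)

/-- `x` is homogeneous of parity `p` (`p = 0`: even, `p = 1`: odd). -/
def IsHom {m n : ℕ} (p : ℕ) (x : GV m n) : Prop :=
  (p = 0 ∧ x.2 = 0) ∨ (p = 1 ∧ x.1 = 0)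

/-- The sign `(-1)^k`. -/
def sgn (k : ℕ) : ℂ := (-1 : ℂ) ^ k

/-- The super-Jordan expression `J^s(w; x, y, z)` for homogeneous elements of
parities `pw, px, py, pz`. -/
def superJ {m n : ℕ} (μ : Tensor m n) (pw px py pz : ℕ) (w x y z : GV m n) : GV m n :=
  mulOf μ (mulOf μ w x) (mulOf μ y z)
    + sgn (px * py) • mulOf μ (mulOf μ w y) (mulOf μ x z)
    + sgn ((px + py) * pz) • mulOf μ (mulOf μ w z) (mulOf μ x y)
    - sgn (pw * px) • mulOf μ x (mulOf μ w (mulOf μ y z))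
    - sgn (py * (pw + px)) • mulOf μ y (mulOf μ w (mulOf μ x z))
    - sgn (pz * (pw + px + py)) • mulOf μ z (mulOf μ w (mulOf μ x y))

/-- `μ` is a Jordan superalgebra structure: supercommutativity and the Jordan
superidentity hold for all homogeneous elements. -/
def IsJordanSuper {m n : ℕ} (μ : Tensor m n) : Prop :=
  (∀ (px py : ℕ) (x y : GV m n), IsHom px x → IsHom py y →
      mulOf μ x y = sgn (px * py) • mulOf μ y x) ∧
  (∀ (pw px py pz : ℕ) (w x y z : GV m n),
      IsHom pw w → IsHom px x → IsHom py y → IsHom pz z →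
      superJ μ pw px py pz w x y z = 0)

/-- The product of two graded subspaces: the span of all products. -/
def mulSub {m n : ℕ} (μ : Tensor m n) (A B : Submodule ℂ (GV m n)) : Submodule ℂ (GV m n) :=
  Submodule.span ℂ {z | ∃ a ∈ A, ∃ b ∈ B, z = mulOf μ a b}

/-- The powers `J^k`: `J^1 = J` and `J^{k+1} = Σ_{i=1}^{k} J^i · J^{k+1-i}`. -/
def powT {m n : ℕ} (μ : Tensor m n) : ℕ → Submodule ℂ (GV m n)
  | 0 => ⊤
  | 1 => ⊤
  | (k + 2) => ⨆ i : Fin (k + 1), mulSub μ (powT μ ((i : ℕ) + 1)) (powT μ (k + 1 - (i : ℕ)))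
  decreasing_by
  · have := i.isLt; omega
  · omega

/-- `μ` is nilpotent: some power vanishes. -/
def IsNilpotentT {m n : ℕ} (μ : Tensor m n) : Prop :=
  ∃ k : ℕ, 1 ≤ k ∧ powT μ k = ⊥

/-- A grading-preserving algebra isomorphism between the superalgebras determined
by `μ` and `μ'`. -/
def Iso {m n : ℕ} (μ μ' : Tensor m n) : Prop :=
  ∃ (T : (Fin m → ℂ) ≃ₗ[ℂ] (Fin m → ℂ)) (S : (Fin n → ℂ) ≃ₗ[ℂ] (Fin n → ℂ)),
    ∀ x y : GV m n,
      (T ((mulOf μ x y).1), S ((mulOf μ x y).2)) = mulOf μ' (T x.1, S x.2) (T y.1, S y.2)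

/-- `μ` degenerates to `μ'`: `μ'` lies in the closure of the orbit of `μ` under
base change (in the standard topology). -/
def degenerates {m n : ℕ} (μ μ' : Tensor m n) : Prop :=
  μ' ∈ closure {ν : Tensor m n | Iso μ ν}

/-- Standard even basis vector `e_i`. -/
def eps {m n : ℕ} (i : Fin m) : GV m n := (Pi.single i 1, 0)

/-- Standard odd basis vector `f_j`. -/
def ph {m n : ℕ} (j : Fin n) : GV m n := (0, Pi.single j 1)


/-- A tensor of type (2,3) with products `e₁² = a·e₂`, `e₁f_j = Σ_k R1 j k f_k`,
`e₂f_j = Σ_k R2 j k f_k` and `f_if_j = W i j · e₁ + Θ i j · e₂`. -/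
def T23 (a : ℂ) (R1 R2 W Θ : Fin 3 → Fin 3 → ℂ) : Tensor 2 3 :=
  (fun i j k => if i = 0 ∧ j = 0 ∧ k = 1 then a else 0,
   fun i => if i = 0 then R1 else R2,
   fun i j k => if k = 0 then W i j else Θ i j)

/-- `e·f₂ = f₁`. -/
def P21 : Fin 3 → Fin 3 → ℂ := ![![0,0,0], ![1,0,0], ![0,0,0]]
/-- `e·f₃ = f₂`. -/
def P32 : Fin 3 → Fin 3 → ℂ := ![![0,0,0], ![0,0,0], ![0,1,0]]
/-- `e·f₃ = f₁`. -/
def P31 : Fin 3 → Fin 3 → ℂ := ![![0,0,0], ![0,0,0], ![1,0,0]]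
/-- `e·f₂ = f₃`. -/
def P23 : Fin 3 → Fin 3 → ℂ := ![![0,0,0], ![0,0,1], ![0,0,0]]
/-- `f₁f₂ = e`. -/
def W12 : Fin 3 → Fin 3 → ℂ := ![![0,1,0], ![-1,0,0], ![0,0,0]]
/-- `f₁f₃ = e`. -/
def W13 : Fin 3 → Fin 3 → ℂ := ![![0,0,1], ![0,0,0], ![-1,0,0]]
/-- `f₂f₃ = e`. -/
def W23 : Fin 3 → Fin 3 → ℂ := ![![0,0,0], ![0,0,1], ![0,-1,0]]

/-- The family `(2,3)₃₁^λ`: `e₁² = e₂`, `e₁f₂ = f₁`, `f₁f₃ = λe₂`, `f₂f₃ = e₁`. -/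
def A31 (l : ℂ) : Tensor 2 3 := T23 1 P21 0 W23 (l • W13)

/-- The family `(2,3)₄₃^γ`: `e₁² = e₂`, `e₁f₂ = f₃`, `e₁f₃ = γf₁`, `e₂f₂ = f₁`. -/
def A43 (g : ℂ) : Tensor 2 3 := T23 1 (P23 + g • P31) P21 0 0

/-- The family `(2,3)₄₄^φ`: `e₁² = e₂`, `e₁f₂ = f₃`, `e₁f₃ = φf₁`, `e₂f₂ = f₁`,
`f₂f₃ = e₂`. -/
def A44 (p : ℂ) : Tensor 2 3 := T23 1 (P23 + p • P31) P21 0 W23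

/-!
Write `T e₁ = a e₁ + b e₂` and let `s` be the `f₂`-coordinate of `S f₂`. Applying an isomorphism
`(T, S)` from `A44 x` to `A44 y` to `e₁² = e₂`, `e₂f₂ = f₁` and `e₁f₂ = f₃` gives `T e₂ = a² e₂`,
`S f₁ = a² s f₁` and `S f₃ ∈ ℂ f₁ + a s f₃`, with `a s ≠ 0` by injectivity. Applying it to
`e₁f₃ = x f₁` and reading off the `f₁`-coordinate gives `x a² s = y a² s`, hence `x = y`.
-/

theorem Iso.refl {m n : ℕ} (μ : Tensor m n) : Iso μ μ :=
  ⟨LinearEquiv.refl ℂ _, LinearEquiv.refl ℂ _, fun _ _ => rfl⟩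

section MapMul

variable {m n : ℕ} {μ μ' : Tensor m n} (T : (Fin m → ℂ) ≃ₗ[ℂ] (Fin m → ℂ))
  (S : (Fin n → ℂ) ≃ₗ[ℂ] (Fin n → ℂ))
  (hTS : ∀ x y : GV m n,
    (T ((mulOf μ x y).1), S ((mulOf μ x y).2)) = mulOf μ' (T x.1, S x.2) (T y.1, S y.2))
include hTS

theorem map_mulOf_even_even (u w : Fin m → ℂ) :
    T (mulOf μ (u, 0) (w, 0)).1 = (mulOf μ' (T u, 0) (T w, 0)).1 := by
  simpa using congrArg Prod.fst (hTS (u, 0) (w, 0))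

theorem map_mulOf_even_odd (u : Fin m → ℂ) (v : Fin n → ℂ) :
    S (mulOf μ (u, 0) (0, v)).2 = (mulOf μ' (T u, 0) (0, S v)).2 := by
  simpa using congrArg Prod.snd (hTS (u, 0) (0, v))

end MapMul

theorem A44_mulOf_even_even (p : ℂ) (u w : Fin 2 → ℂ) :
    (mulOf (A44 p) (u, 0) (w, 0)).1 = ![0, u 0 * w 0] := by
  funext k
  fin_cases k <;> simp [mulOf, A44, T23, Fin.sum_univ_two]

theorem A44_mulOf_even_odd (p : ℂ) (u : Fin 2 → ℂ) (v : Fin 3 → ℂ) :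
    (mulOf (A44 p) (u, 0) (0, v)).2 = ![u 0 * v 2 * p + u 1 * v 1, 0, u 0 * v 1] := by
  funext k
  fin_cases k <;> simp [mulOf, A44, T23, P23, P31, P21, Fin.sum_univ_two, Fin.sum_univ_three]

theorem eq_of_iso_A44 {x y : ℂ} (h : Iso (A44 x) (A44 y)) : x = y := by
  obtain ⟨T, S, hTS⟩ := h
  have hee (u w : Fin 2 → ℂ) : T ![0, u 0 * w 0] = ![0, T u 0 * T w 0] := by
    simpa only [A44_mulOf_even_even] using map_mulOf_even_even T S hTS u w
  have heo (u : Fin 2 → ℂ) (v : Fin 3 → ℂ) :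
      S ![u 0 * v 2 * x + u 1 * v 1, 0, u 0 * v 1] =
        ![T u 0 * S v 2 * y + T u 1 * S v 1, 0, T u 0 * S v 1] := by
    simpa only [A44_mulOf_even_odd] using map_mulOf_even_odd T S hTS u v
  set a := T ![1, 0] 0
  set b := T ![1, 0] 1
  set s := S ![0, 1, 0] 1
  have hTe₂ : T ![0, 1] = ![0, a * a] := by simpa using hee ![1, 0] ![1, 0]
  have ha : a ≠ 0 := by
    rintro h0
    have : T ![0, 1] ≠ 0 := T.map_ne_zero_iff.mpr (by simp)
    exact this (by rw [hTe₂, h0]; simp)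
  have hSf₁ : S ![1, 0, 0] = ![a * a * s, 0, 0] := by simpa [hTe₂] using heo ![0, 1] ![0, 1, 0]
  have hs : s ≠ 0 := by
    rintro h0
    have : S ![1, 0, 0] ≠ 0 := S.map_ne_zero_iff.mpr (by simp)
    exact this (by rw [hSf₁, h0]; simp)
  have hSf₃ : S ![0, 0, 1] = ![a * S ![0, 1, 0] 2 * y + b * s, 0, a * s] := by
    simpa using heo ![1, 0] ![0, 1, 0]
  have hSx : S ![x, 0, 0] = x • S ![1, 0, 0] := by
    rw [← map_smul]
    congr 1
    simp
  have hf₁ : x * (a * a * s) = a * (a * s) * y := by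
    have := heo ![1, 0] ![0, 0, 1]
    simp only [Matrix.cons_val_zero, Matrix.cons_val_one, Matrix.cons_val, Matrix.cons_val_fin_one,
      one_mul, mul_one, mul_zero, add_zero] at this
    rw [hSx, hSf₁, hSf₃] at this
    simpa using congrFun this 0
  have has : a * a * s ≠ 0 := mul_ne_zero (mul_ne_zero ha ha) hs
  exact mul_right_cancel₀ has (by linear_combination hf₁)

/-- the superalgebras (2,3)₄₄^φ are isomorphic iff the parameters agree. -/
theorem stmt7 : ∀ x y : ℂ, (Iso (A44 x) (A44 y) ↔ x = y) :=
  fun _ _ => ⟨eq_of_iso_A44, fun h => h ▸ Iso.refl _⟩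

end
end

section
/- Let J = J₀ ⊕ J₁ be a nilpotent Jordan superalgebra over ℂ with dim J₁ = 3 and with J₀ two-dimensional, spanned by even elements e₁, e₂ satisfying e₁² = e₂ and e₁e₂ = e₂² = 0. Then the restricted left multiplication operators l_{e₁}, l_{e₂} on J₁ (given by l_x(f) = x·f) satisfy l_{e₁} ∘ l_{e₂} = l_{e₂} ∘ l_{e₁} = 0, i.e. e₁(e₂f) = 0 and e₂(e₁f) = 0 for all f ∈ J₁. -/
noncomputable section

/-!
On the odd part, let `A` and `B` be the operators of multiplication by `e₁` and `e₂`. Instances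
of the Jordan superidentity with three even arguments and one odd argument give
`AB = BA`, `3AB = 2A³`, `B² = 2ABA` and `AB² + B²A = 0`. Since `A` and `B` commute, the last one
gives `AB² = 0`, hence `A³B = 0` by the third and `A⁵ = 0` by the second. A nilpotent operator on a
space of dimension at most `3` has `A³ = 0`, and then `3AB = 2A³` gives `AB = BA = 0`.
-/

open Matrix

instance Matrix.instIsAddTorsionFree {ι κ α : Type*} [AddMonoid α] [IsAddTorsionFree α] :
    IsAddTorsionFree (Matrix ι κ α) :=
  Pi.instIsAddTorsionFree

theorem pow_five_eq_zero_of_commute_of_relations {R : Type*} [Ring R] [IsAddTorsionFree R]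
    {A B : R} (hAB : Commute A B) (h₁ : 3 • (A * B) = 2 • A ^ 3)
    (h₃ : B ^ 2 = 2 • (A * B * A)) (h₄ : A * B ^ 2 + B ^ 2 * A = 0) : A ^ 5 = 0 := by
  have hAB2 : A * B ^ 2 = 0 := by
    rwa [← (hAB.pow_right 2).eq, ← two_nsmul, two_nsmul_eq_zero] at h₄
  have hA3B : A ^ 3 * B = 0 := by
    have : A * B ^ 2 = 2 • (A ^ 3 * B) := by
      rw [h₃, mul_smul_comm, mul_assoc, ← hAB.eq, pow_succ', pow_two, mul_assoc, mul_assoc]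
    rwa [hAB2, eq_comm, two_nsmul_eq_zero] at this
  have : 2 • A ^ 5 = 3 • (A ^ 2 * (A * B)) := by
    rw [← mul_smul_comm, h₁, mul_smul_comm, ← pow_add]
  rwa [← mul_assoc, ← pow_succ, hA3B, smul_zero, two_nsmul_eq_zero] at this

theorem Matrix.pow_card_eq_zero_of_isNilpotent {ι K : Type*} [Fintype ι] [DecidableEq ι] [Field K]
    {A : Matrix ι ι K} (hA : IsNilpotent A) : A ^ Fintype.card ι = 0 := by
  have hchar : A.charpoly = Polynomial.X ^ Fintype.card ι :=
    sub_eq_zero.mp (isNilpotent_charpoly_sub_pow_of_isNilpotent hA).eq_zero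
  simpa [hchar] using aeval_self_charpoly A

section OddAction

variable {m n : ℕ} (μ : Tensor m n)

/-- `u ᵥ* oddAct μ a` is the odd part of `a · (0, u)`; since matrices act on row vectors, the
operator `f ↦ a · (b · f)` has matrix `oddAct μ b * oddAct μ a`. -/
def oddAct (a : Fin m → ℂ) : Matrix (Fin n) (Fin n) ℂ :=
  Matrix.of fun j k => ∑ i, a i * μ.2.1 i j k

def evenMul (a b : Fin m → ℂ) : Fin m → ℂ :=
  (mulOf μ (a, 0) (b, 0)).1

lemma mulOf_even_even (a b : Fin m → ℂ) : mulOf μ (a, 0) (b, 0) = (evenMul μ a b, 0) := by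
  ext k <;> simp [mulOf, evenMul]

lemma mulOf_even_odd (a : Fin m → ℂ) (u : Fin n → ℂ) :
    mulOf μ (a, 0) (0, u) = (0, u ᵥ* oddAct μ a) := by
  ext k
  · simp [mulOf]
  · simp only [mulOf, oddAct, vecMul, dotProduct, of_apply, Finset.mul_sum, Pi.zero_apply]
    simp only [zero_mul, mul_zero, Finset.sum_const_zero, add_zero]
    rw [Finset.sum_comm]
    exact Finset.sum_congr rfl fun _ _ => Finset.sum_congr rfl fun _ _ => by ring

lemma mulOf_odd_even (u : Fin n → ℂ) (a : Fin m → ℂ) :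
    mulOf μ (0, u) (a, 0) = (0, u ᵥ* oddAct μ a) := by
  ext k
  · simp [mulOf]
  · simp only [mulOf, oddAct, vecMul, dotProduct, of_apply, Finset.mul_sum, Pi.zero_apply]
    simp only [zero_mul, mul_zero, Finset.sum_const_zero, zero_add]
    rw [Finset.sum_comm]
    exact Finset.sum_congr rfl fun _ _ => Finset.sum_congr rfl fun _ _ => by ring

lemma oddAct_zero : oddAct μ 0 = 0 := by
  ext; simp [oddAct]

lemma evenMul_zero_right (a : Fin m → ℂ) : evenMul μ a 0 = 0 := by
  ext; simp [evenMul, mulOf]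

end OddAction

section Jordan

variable {m n : ℕ} {μ : Tensor m n}

lemma isHom_even (a : Fin m → ℂ) : IsHom 0 ((a, 0) : GV m n) := Or.inl ⟨rfl, rfl⟩

lemma isHom_odd (u : Fin n → ℂ) : IsHom 1 (((0 : Fin m → ℂ), u) : GV m n) := Or.inr ⟨rfl, rfl⟩

lemma IsJordanSuper.evenMul_comm (hJ : IsJordanSuper μ) (a b : Fin m → ℂ) :
    evenMul μ a b = evenMul μ b a := by
  simpa [sgn, mulOf_even_even] using hJ.1 0 0 _ _ (isHom_even (n := n) a) (isHom_even b)

lemma IsJordanSuper.oddAct_jordan_odd_last (hJ : IsJordanSuper μ) (a b c : Fin m → ℂ) :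
    oddAct μ c * oddAct μ (evenMul μ a b) + oddAct μ b * oddAct μ (evenMul μ a c)
        + oddAct μ a * oddAct μ (evenMul μ b c)
      = oddAct μ c * oddAct μ a * oddAct μ b + oddAct μ b * oddAct μ a * oddAct μ c
        + oddAct μ (evenMul μ a (evenMul μ b c)) := by
  refine ext_iff_vecMul.mpr fun u => ?_
  have h := congrArg Prod.snd <| hJ.2 0 0 0 1 _ _ _ _
    (isHom_even a) (isHom_even b) (isHom_even c) (isHom_odd u)
  simp only [superJ, sgn, mulOf_even_even, mulOf_even_odd, mulOf_odd_even, vecMul_vecMul, mul_zero,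
    mul_one, pow_zero, one_smul, Prod.mk_add_mk, Prod.mk_sub_mk, add_zero, sub_self, Prod.snd_zero] at h
  rw [← sub_eq_zero, ← h]
  simp only [vecMul_add]
  abel

lemma IsJordanSuper.oddAct_jordan_odd_first (hJ : IsJordanSuper μ) (a b c : Fin m → ℂ) :
    oddAct μ a * oddAct μ (evenMul μ b c) + oddAct μ b * oddAct μ (evenMul μ a c)
        + oddAct μ c * oddAct μ (evenMul μ a b)
      = oddAct μ (evenMul μ b c) * oddAct μ a + oddAct μ (evenMul μ a c) * oddAct μ b
        + oddAct μ (evenMul μ a b) * oddAct μ c := by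
  refine ext_iff_vecMul.mpr fun u => ?_
  have h := congrArg Prod.snd <| hJ.2 1 0 0 0 _ _ _ _
    (isHom_odd u) (isHom_even a) (isHom_even b) (isHom_even c)
  simp only [superJ, sgn, mulOf_even_even, mulOf_even_odd, mulOf_odd_even, vecMul_vecMul, mul_zero,
    mul_one, pow_zero, one_smul, Prod.mk_add_mk, Prod.mk_sub_mk, add_zero, sub_self, Prod.snd_zero] at h
  rw [← sub_eq_zero, ← h]
  simp only [vecMul_add]
  abel

end Jordan

section SquareZeroPair

variable {m n : ℕ} {μ : Tensor m n} {a b : Fin m → ℂ}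

lemma IsJordanSuper.commute_oddAct (hJ : IsJordanSuper μ) (haa : evenMul μ a a = b) :
    Commute (oddAct μ a) (oddAct μ b) := by
  have h := hJ.oddAct_jordan_odd_first a a a
  rw [haa] at h
  refine (nsmul_right_inj (n := 3) three_ne_zero).mp ?_
  calc 3 • (oddAct μ a * oddAct μ b) = _ := by abel
    _ = _ := h
    _ = 3 • (oddAct μ b * oddAct μ a) := by abel

lemma IsJordanSuper.three_nsmul_oddAct_mul (hJ : IsJordanSuper μ) (haa : evenMul μ a a = b)
    (hab : evenMul μ a b = 0) : 3 • (oddAct μ a * oddAct μ b) = 2 • oddAct μ a ^ 3 := by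
  have h := hJ.oddAct_jordan_odd_last a a a
  rw [haa, hab, oddAct_zero, add_zero] at h
  calc 3 • (oddAct μ a * oddAct μ b) = _ := by abel
    _ = _ := h
    _ = 2 • oddAct μ a ^ 3 := by rw [pow_three, mul_assoc]; abel

lemma IsJordanSuper.oddAct_sq (hJ : IsJordanSuper μ) (haa : evenMul μ a a = b)
    (hab : evenMul μ a b = 0) (hbb : evenMul μ b b = 0) :
    oddAct μ b ^ 2 = 2 • (oddAct μ a * oddAct μ b * oddAct μ a) := by
  have h := hJ.oddAct_jordan_odd_last b a a
  rw [hJ.evenMul_comm b a, hab, haa, hbb, oddAct_zero, mul_zero, zero_add, zero_add,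
    add_zero] at h
  rw [sq, two_nsmul, h]

lemma IsJordanSuper.oddAct_mul_sq_add (hJ : IsJordanSuper μ)
    (hab : evenMul μ a b = 0) (hbb : evenMul μ b b = 0) :
    oddAct μ a * oddAct μ b ^ 2 + oddAct μ b ^ 2 * oddAct μ a = 0 := by
  have h := hJ.oddAct_jordan_odd_last b b a
  rw [hJ.evenMul_comm b a, hab, hbb, evenMul_zero_right, oddAct_zero, mul_zero, mul_zero,
    add_zero, add_zero, add_zero] at h
  rw [sq, ← mul_assoc, h]

lemma IsJordanSuper.oddAct_mul_eq_zero (hJ : IsJordanSuper μ) (haa : evenMul μ a a = b) (hab : evenMul μ a b = 0)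
    (hbb : evenMul μ b b = 0) (hn : n ≤ 3) :
    oddAct μ a * oddAct μ b = 0 ∧ oddAct μ b * oddAct μ a = 0 := by
  have hA5 : oddAct μ a ^ 5 = 0 := pow_five_eq_zero_of_commute_of_relations
    (hJ.commute_oddAct haa) (hJ.three_nsmul_oddAct_mul haa hab) (hJ.oddAct_sq haa hab hbb)
    (hJ.oddAct_mul_sq_add hab hbb)
  have hA3 : oddAct μ a ^ 3 = 0 := by
    have := Matrix.pow_card_eq_zero_of_isNilpotent ⟨5, hA5⟩
    rw [Fintype.card_fin] at this
    exact pow_eq_zero_of_le hn this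
  have hAB : oddAct μ a * oddAct μ b = 0 := by
    have := hJ.three_nsmul_oddAct_mul haa hab
    rwa [hA3, smul_zero, nsmul_eq_zero_iff_right three_ne_zero] at this
  exact ⟨hAB, (hJ.commute_oddAct haa).eq ▸ hAB⟩

end SquareZeroPair

theorem stmt10_general (μ : Tensor 2 3) (hJ : IsJordanSuper μ)
    (h11 : mulOf μ (eps 0) (eps 0) = eps 1)
    (h12 : mulOf μ (eps 0) (eps 1) = 0)
    (h22 : mulOf μ (eps 1) (eps 1) = 0) :
    ∀ u : Fin 3 → ℂ,
      mulOf μ (eps 0) (mulOf μ (eps 1) ((0 : Fin 2 → ℂ), u)) = 0 ∧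
      mulOf μ (eps 1) (mulOf μ (eps 0) ((0 : Fin 2 → ℂ), u)) = 0 := by
  obtain ⟨hAB, hBA⟩ := hJ.oddAct_mul_eq_zero (a := Pi.single 0 1) (b := Pi.single 1 1)
    (congrArg Prod.fst h11) (congrArg Prod.fst h12) (congrArg Prod.fst h22) le_rfl
  intro u
  constructor <;>
    simp only [eps, mulOf_even_odd, vecMul_vecMul, hAB, hBA, vecMul_zero, Prod.mk_zero_zero]

/-- in a nilpotent Jordan superalgebra of type (2,3) with even part
satisfying `e₁² = e₂`, `e₁e₂ = e₂² = 0`, the restricted left multiplications by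
`e₁` and `e₂` on the odd part compose to zero in both orders. -/
theorem stmt10 (μ : Tensor 2 3) (hJ : IsJordanSuper μ) (hN : IsNilpotentT μ)
    (h11 : mulOf μ (eps 0) (eps 0) = eps 1)
    (h12 : mulOf μ (eps 0) (eps 1) = 0)
    (h22 : mulOf μ (eps 1) (eps 1) = 0) :
    ∀ u : Fin 3 → ℂ,
      mulOf μ (eps 0) (mulOf μ (eps 1) ((0 : Fin 2 → ℂ), u)) = 0 ∧
      mulOf μ (eps 1) (mulOf μ (eps 0) ((0 : Fin 2 → ℂ), u)) = 0 :=
  stmt10_general μ hJ h11 h12 h22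

end
end
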